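/- arXiv:1504.07850 — 2 statements merged into one kernel-verified Lean document; each statement's English description precedes it below -/
import Mathlib

section
/- Let n ≥ 2, λ > 2 and 0 < α ≤ n(λ−2)/2. Let ψ satisfy the size condition |ψ(x)| ≤ C₀(1+|x|)^{−n−α}, let σ, w be weights, R a cube and f ∈ L²(σ). Then ∬_{W_R} ∫_{ℝⁿ} |ψ_t * (f σ)(x−y)|² (t/(t+|y|))^{nλ} (dy/tⁿ) w(x) dx (dt/t) ≤ C ‖f‖²_{L²(σ)} w(R) ∫_{ℝⁿ} ℓ(R)^{2α} (ℓ(R) + dist(z,R))^{−2(n+α)} σ(z) dz, where C depends only on n, α, λ, C₀. -/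
open MeasureTheory Set
open scoped ENNReal NNReal BigOperators

noncomputable section

/-- Euclidean space `ℝⁿ`. -/
abbrev E (n : ℕ) := EuclideanSpace ℝ (Fin n)

/-- An axis-parallel cube in `ℝⁿ`, given by its corner and positive side length. -/
structure Cube (n : ℕ) where
  corner : E n
  side : ℝ
  side_pos : 0 < side

namespace Cube

/-- The (half-open) cube as a subset of `ℝⁿ`. -/
def set {n : ℕ} (Q : Cube n) : Set (E n) :=
  {x | ∀ i, Q.corner i ≤ x i ∧ x i < Q.corner i + Q.side}

/-- The Lebesgue measure `|Q| = ℓ(Q)ⁿ` of a cube. -/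
def vol {n : ℕ} (Q : Cube n) : ℝ := Q.side ^ n

/-- The cube concentric with `Q` with side length `C·ℓ(Q)`. -/
def dilate {n : ℕ} (Q : Cube n) (C : ℝ) : Set (E n) :=
  {x | ∀ i, Q.corner i + Q.side / 2 - C * Q.side / 2 ≤ x i ∧
        x i < Q.corner i + Q.side / 2 + C * Q.side / 2}

/-- Membership in the standard dyadic grid of `ℝⁿ`. -/
def IsDyadic {n : ℕ} (Q : Cube n) : Prop :=
  ∃ k : ℤ, ∃ m : Fin n → ℤ, Q.side = 2 ^ k ∧ ∀ i, Q.corner i = 2 ^ k * m i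

/-- The dyadic child of `Q` indexed by `ε ∈ {0,1}ⁿ`. -/
def child {n : ℕ} (Q : Cube n) (ε : Fin n → Bool) : Cube n :=
  ⟨WithLp.toLp 2 (fun i => Q.corner i + if ε i then Q.side / 2 else 0 : Fin n → ℝ), Q.side / 2,
    half_pos Q.side_pos⟩

end Cube

/-- Distance between two subsets of `ℝⁿ`. -/
def sdist {n : ℕ} (A B : Set (E n)) : ℝ := sInf (Set.image2 dist A B)

/-- A weight: a nonnegative locally integrable function on `ℝⁿ`. -/
def IsWeight {n : ℕ} (σ : E n → ℝ) : Prop :=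
  (∀ x, 0 ≤ σ x) ∧ MeasureTheory.LocallyIntegrable σ

/-- `σ(Q) = ∫_Q σ dx`. -/
def cInt {n : ℕ} (σ : E n → ℝ) (Q : Cube n) : ℝ := ∫ x in Q.set, σ x

/-- The square `𝒜₂²` of the two-weight A₂ constant, as an extended real. -/
def A2sq {n : ℕ} (σ w : E n → ℝ) : ℝ≥0∞ :=
  ⨆ Q : Cube n, ENNReal.ofReal ((cInt σ Q / Q.vol) * (cInt w Q / Q.vol))

/-- `P_t^α` applied to the measure `g dx` (`g` a possibly signed density):
`P_t^α(g dx)(y) = ∫ t^α (t² + |y−z|²)^{-(n+α)/2} g(z) dz`. -/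
def Pt (n : ℕ) (α : ℝ) (g : E n → ℝ) (y : E n) (t : ℝ) : ℝ :=
  ∫ z, t ^ α / (t ^ 2 + dist y z ^ 2) ^ (((n : ℝ) + α) / 2) * g z

/-- `P_t^α` applied to a positive measure `ν`. -/
def PtM (n : ℕ) (α : ℝ) (ν : Measure (E n)) (y : E n) (t : ℝ) : ℝ :=
  ∫ z, t ^ α / (t ^ 2 + dist y z ^ 2) ^ (((n : ℝ) + α) / 2) ∂ν

/-- `|∇P_t^α (g dx)(y,t)|²`, where `∇ = (∂_{y₁},…,∂_{yₙ},∂_t)`. -/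
def gradPSq (n : ℕ) (α : ℝ) (g : E n → ℝ) (y : E n) (t : ℝ) : ℝ :=
  (∑ i : Fin n,
      (deriv (fun s : ℝ => Pt n α g (y + s • EuclideanSpace.single i (1 : ℝ)) t) 0) ^ 2)
    + (deriv (fun s : ℝ => Pt n α g y s) t) ^ 2

/-- The square of the Littlewood–Paley function `g_λ^{*,α}(g dx)(x)`. -/
def gStarSq (n : ℕ) (α lam : ℝ) (g : E n → ℝ) (x : E n) : ℝ≥0∞ :=
  ∫⁻ y, ∫⁻ t in Set.Ioi (0 : ℝ),
    ENNReal.ofReal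
      ((t / (t + dist x y)) ^ ((n : ℝ) * lam) * gradPSq n α g y t / t ^ ((n : ℝ) - 1))

/-- `‖f‖²_{L²(σ)}` as an extended real. -/
def l2sq {n : ℕ} (σ f : E n → ℝ) : ℝ≥0∞ := ∫⁻ x, ENNReal.ofReal (f x ^ 2 * σ x)

/-- The square `ℬ²` of the testing constant, as an extended real. -/
def Bsq (n : ℕ) (α lam : ℝ) (σ w : E n → ℝ) : ℝ≥0∞ :=
  ⨆ Q : Cube n,
    (∫⁻ y, ∫⁻ t in Set.Ioc (0 : ℝ) Q.side, ∫⁻ x in Q.set,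
        ENNReal.ofReal ((t / (t + dist x y)) ^ ((n : ℝ) * lam)
          * gradPSq n α (Q.set.indicator σ) y t * w x / t ^ ((n : ℝ) - 1)))
      / ENNReal.ofReal (cInt σ Q)

/-- The two-weight norm inequality `‖g_λ^{*,α}(fσ)‖_{L²(w)} ≤ N ‖f‖_{L²(σ)}` (in squared form). -/
def OpBound (n : ℕ) (α lam : ℝ) (σ w : E n → ℝ) (N : ℝ) : Prop :=
  ∀ f : E n → ℝ, Measurable f → l2sq σ f < ⊤ →
    (∫⁻ x, gStarSq n α lam (fun z => f z * σ z) x * ENNReal.ofReal (w x))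
      ≤ ENNReal.ofReal (N ^ 2) * l2sq σ f

/-- The family `𝒞_α` of test functions for the intrinsic square function. -/
def CAlpha (n : ℕ) (α : ℝ) (φ : E n → ℝ) : Prop :=
  Function.support φ ⊆ Metric.closedBall 0 1 ∧ (∫ x, φ x) = 0 ∧
    ∀ x x' : E n, |φ x - φ x'| ≤ ‖x - x'‖ ^ α

/-- `A_α(g dx)(y,t) = sup_{φ ∈ 𝒞_α} |(g dx) * φ_t(y)|`. -/
def AIntr (n : ℕ) (α : ℝ) (g : E n → ℝ) (y : E n) (t : ℝ) : ℝ :=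
  ⨆ φ : {φ : E n → ℝ // CAlpha n α φ},
    |∫ z, t ^ (-(n : ℝ)) * φ.1 (t⁻¹ • (y - z)) * g z|

/-- The square of the intrinsic square function `g_{λ,α}^*(g dx)(x)`. -/
def gIntrSq (n : ℕ) (α lam : ℝ) (g : E n → ℝ) (x : E n) : ℝ≥0∞ :=
  ∫⁻ y, ∫⁻ t in Set.Ioi (0 : ℝ),
    ENNReal.ofReal
      ((t / (t + dist x y)) ^ ((n : ℝ) * lam) * AIntr n α g y t ^ 2 / t ^ ((n : ℝ) + 1))

/-- The square `ℬ_α²` of the intrinsic testing constant. -/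
def BIntrSq (n : ℕ) (α lam : ℝ) (σ w : E n → ℝ) : ℝ≥0∞ :=
  ⨆ Q : Cube n,
    (∫⁻ y, ∫⁻ t in Set.Ioc (0 : ℝ) Q.side, ∫⁻ x in Q.set,
        ENNReal.ofReal ((t / (t + dist x y)) ^ ((n : ℝ) * lam)
          * AIntr n α (Q.set.indicator σ) y t ^ 2 * w x / t ^ ((n : ℝ) + 1)))
      / ENNReal.ofReal (cInt σ Q)

/-- The two-weight norm inequality for the intrinsic square function (in squared form). -/
def OpBoundIntr (n : ℕ) (α lam : ℝ) (σ w : E n → ℝ) (N : ℝ) : Prop :=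
  ∀ f : E n → ℝ, Measurable f → l2sq σ f < ⊤ →
    (∫⁻ x, gIntrSq n α lam (fun z => f z * σ z) x * ENNReal.ofReal (w x))
      ≤ ENNReal.ofReal (N ^ 2) * l2sq σ f

/-- A dyadic cube `I` is good (w.r.t. parameters `r`, `γ`) if there is no dyadic `J` with
`ℓ(J) ≥ 2^r ℓ(I)` and `dist(I, ∂J) ≤ ℓ(I)^γ ℓ(J)^{1−γ}`. -/
def IsGood (n : ℕ) (r : ℕ) (γ : ℝ) (I : Cube n) : Prop :=
  ¬ ∃ J : Cube n, J.IsDyadic ∧ 2 ^ r * I.side ≤ J.side ∧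
      sdist I.set (frontier J.set) ≤ I.side ^ γ * J.side ^ (1 - γ)

/-- The defining conditions for the Whitney family `𝒲_I`. -/
def WhitneyPred (n : ℕ) (r : ℕ) (γ : ℝ) (I K : Cube n) : Prop :=
  K.IsDyadic ∧ K.set ⊆ I.set ∧ 2 ^ r * K.side ≤ I.side ∧
    K.side ^ γ * I.side ^ (1 - γ) ≤ sdist K.set (frontier I.set)

/-- `K ∈ 𝒲_I`: `K` is a maximal dyadic cube satisfying the Whitney conditions in `I`. -/
def InWhitney (n : ℕ) (r : ℕ) (γ : ℝ) (I K : Cube n) : Prop :=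
  WhitneyPred n r γ I K ∧
    ∀ K' : Cube n, WhitneyPred n r γ I K' → K.set ⊆ K'.set → K'.set = K.set

/-- The size and Hölder conditions on `ψ` with constant `C₀`. -/
def PsiCond (n : ℕ) (α C₀ : ℝ) (ψ : E n → ℝ) : Prop :=
  (∀ x : E n, |ψ x| ≤ C₀ * (1 + ‖x‖) ^ (-(n : ℝ) - α)) ∧
    ∀ x x' : E n, |ψ x - ψ x'| ≤ C₀ * ‖x - x'‖ ^ α * (1 + ‖x‖) ^ (-(n : ℝ) - α)

/-- `ψ_t * (g dx)(u) = ∫ t^{-n} ψ((u−z)/t) g(z) dz`. -/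
def psiConv (n : ℕ) (ψ : E n → ℝ) (t : ℝ) (g : E n → ℝ) (u : E n) : ℝ :=
  ∫ z, t ^ (-(n : ℝ)) * ψ (t⁻¹ • (u - z)) * g z

/-- The average `E_Q^σ f = σ(Q)⁻¹ ∫_Q f σ dx` (with the convention `0` if `σ(Q) = 0`). -/
def avg (n : ℕ) (σ f : E n → ℝ) (Q : Cube n) : ℝ :=
  (∫ x in Q.set, f x * σ x) / cInt σ Q

/-- The martingale difference `Δ_Q^σ f = Σ_{Q' child of Q} (E_{Q'}^σ f − E_Q^σ f) 1_{Q'}`. -/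
def mdiff (n : ℕ) (σ f : E n → ℝ) (Q : Cube n) (x : E n) : ℝ :=
  ∑ ε : Fin n → Bool,
    ((Q.child ε).set).indicator (fun _ => avg n σ f (Q.child ε) - avg n σ f Q) x

/-- The Poisson average `𝒫_α(K, g dx)` of a signed density `g`. -/
def poissonAvg (n : ℕ) (α : ℝ) (K : Cube n) (g : E n → ℝ) : ℝ :=
  ∫ x, K.side ^ α / (K.side + Metric.infDist x K.set) ^ ((n : ℝ) + α) * g x

/-- The Poisson average `𝒫_α(K, g dx)` of a nonnegative density `g`, as an extended real. -/
def poissonAvgD (n : ℕ) (α : ℝ) (K : Cube n) (g : E n → ℝ) : ℝ≥0∞ :=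
  ∫⁻ x, ENNReal.ofReal (K.side ^ α / (K.side + Metric.infDist x K.set) ^ ((n : ℝ) + α) * g x)

/-- The Poisson average `𝒫_α(K, ν)` of a positive measure `ν`. -/
def poissonAvgM (n : ℕ) (α : ℝ) (K : Cube n) (ν : Measure (E n)) : ℝ≥0∞ :=
  ∫⁻ x, ENNReal.ofReal (K.side ^ α / (K.side + Metric.infDist x K.set) ^ ((n : ℝ) + α)) ∂ν


namespace WRCS

lemma lint_comp_inv_smul {n : ℕ} (g : E n → ℝ≥0∞) (hg : Measurable g) {t : ℝ} (ht : 0 < t) :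
    ∫⁻ y : E n, g (t⁻¹ • y) = ENNReal.ofReal (t ^ n) * ∫⁻ v, g v := by
  have h := MeasureTheory.lintegral_map (μ := (volume : Measure (E n))) hg
    (measurable_const_smul (M := ℝ) t⁻¹)
  rw [MeasureTheory.Measure.map_addHaar_smul (volume : Measure (E n)) (inv_ne_zero ht.ne')] at h
  rw [← h]
  simp [MeasureTheory.lintegral_smul_measure, finrank_euclideanSpace_fin, ← inv_pow,
    abs_of_nonneg (pow_nonneg ht.le n), ENNReal.ofReal]
  rw [ENNReal.smul_def, smul_eq_mul]

lemma kk_eq {t a P : ℝ} (ht : 0 < t) (_ha : 0 ≤ a) :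
    (t/(t+a)) ^ P = (1 + a/t) ^ (-P) := by
  have h1 : t/(t+a) = ((1 + a/t))⁻¹ := by rw [one_add_div ht.ne', inv_div]
  have h2 : (0:ℝ) ≤ 1 + a/t := by positivity
  rw [h1, Real.inv_rpow h2, ← Real.rpow_neg h2]

lemma meas_kern {P : ℝ} {n : ℕ} : Measurable (fun v : E n => ENNReal.ofReal ((1+‖v‖) ^ (-P))) := by
  fun_prop

lemma norm_int {n : ℕ} {t P : ℝ} (ht : 0 < t) (u : E n) :
    ∫⁻ y : E n, ENNReal.ofReal ((t/(t+‖u - y‖)) ^ P)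
      = ENNReal.ofReal (t^n) * ∫⁻ v : E n, ENNReal.ofReal ((1+‖v‖) ^ (-P)) := by
  have hmp : MeasurePreserving (fun y : E n => u - y) volume volume :=
    Measure.measurePreserving_sub_left volume u
  have hF : Measurable (fun y : E n => ENNReal.ofReal ((t/(t+‖y‖)) ^ P)) := by fun_prop
  calc ∫⁻ y : E n, ENNReal.ofReal ((t/(t+‖u - y‖)) ^ P)
      = ∫⁻ v : E n, ENNReal.ofReal ((t/(t+‖v‖)) ^ P) := hmp.lintegral_comp hF
    _ = ∫⁻ v : E n, ENNReal.ofReal ((1+‖t⁻¹ • v‖) ^ (-P)) := by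
        refine lintegral_congr fun v => ?_
        rw [kk_eq ht (norm_nonneg _), norm_smul]
        congr 2
        rw [norm_inv, Real.norm_eq_abs, abs_of_pos ht, inv_mul_eq_div]
    _ = ENNReal.ofReal (t^n) * ∫⁻ v : E n, ENNReal.ofReal ((1+‖v‖) ^ (-P)) :=
        lint_comp_inv_smul _ meas_kern ht

lemma norm_int' {n : ℕ} {t P : ℝ} (ht : 0 < t) :
    ∫⁻ y : E n, ENNReal.ofReal ((t/(t+‖y‖)) ^ P)
      = ENNReal.ofReal (t^n) * ∫⁻ v : E n, ENNReal.ofReal ((1+‖v‖) ^ (-P)) := by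
  simpa using norm_int (n := n) (t := t) (P := P) ht 0

lemma kernel_ptwise {t A B : ℝ} (ht : 0 < t) (hB : 0 ≤ B) (hBA : B ≤ A)
    {a b c : ℝ} (ha : 0 ≤ a) (hb : 0 ≤ b) (hc : 0 ≤ c) (habc : c ≤ a + b) :
    (t/(t+a)) ^ A * (t/(t+b)) ^ B ≤
      2 ^ A * (t/(t+c)) ^ B * ((t/(t+b)) ^ B + (t/(t+a)) ^ A) := by
  have hA : 0 ≤ A := le_trans hB hBA
  have bpos : ∀ x : ℝ, 0 ≤ x → (0:ℝ) < t/(t+x) := fun x hx => by positivity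
  have ble1 : ∀ x : ℝ, 0 ≤ x → t/(t+x) ≤ 1 := fun x hx => by
    rw [div_le_one (by positivity)]; linarith
  have key : ∀ x P : ℝ, 0 ≤ x → c/2 ≤ x → B ≤ P → P ≤ A →
      (t/(t+x)) ^ P ≤ 2 ^ A * (t/(t+c)) ^ B := by
    intro x P hx hcx hBP hPA
    have h1 : t/(t+x) ≤ 2 * (t/(t+c)) := by
      rw [div_le_iff₀ (by positivity)]
      have h2 : t * (t + c) ≤ 2 * t * (t + x) := by nlinarith
      calc t = (t * (t+c)) / (t+c) := by field_simp
        _ ≤ (2 * t * (t + x)) / (t+c) := by gcongr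
        _ = 2 * (t / (t + c)) * (t + x) := by ring
    calc (t/(t+x)) ^ P ≤ (2 * (t/(t+c))) ^ P :=
          Real.rpow_le_rpow (bpos x hx).le h1 (le_trans hB hBP)
      _ = 2 ^ P * (t/(t+c)) ^ P := Real.mul_rpow (by norm_num) (bpos c hc).le
      _ ≤ 2 ^ A * (t/(t+c)) ^ B := by
          apply mul_le_mul
          · exact Real.rpow_le_rpow_of_exponent_le one_le_two hPA
          · exact Real.rpow_le_rpow_of_exponent_ge (bpos c hc) (ble1 c hc) hBP
          · exact Real.rpow_nonneg (bpos c hc).le P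
          · positivity
  rcases le_or_gt (c/2) a with hca | hca
  · have h := key a A ha hca hBA le_rfl
    calc (t/(t+a)) ^ A * (t/(t+b)) ^ B
        ≤ (2 ^ A * (t/(t+c)) ^ B) * (t/(t+b)) ^ B :=
          mul_le_mul_of_nonneg_right h (Real.rpow_nonneg (bpos b hb).le B)
      _ ≤ 2 ^ A * (t/(t+c)) ^ B * ((t/(t+b)) ^ B + (t/(t+a)) ^ A) := by
          apply mul_le_mul_of_nonneg_left _ (by positivity)
          simp only [le_add_iff_nonneg_right]
          positivity
  · have hcb : c/2 ≤ b := by linarith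
    have h := key b B hb hcb le_rfl hBA
    calc (t/(t+a)) ^ A * (t/(t+b)) ^ B
        = (t/(t+b)) ^ B * (t/(t+a)) ^ A := mul_comm _ _
      _ ≤ (2 ^ A * (t/(t+c)) ^ B) * (t/(t+a)) ^ A :=
          mul_le_mul_of_nonneg_right h (Real.rpow_nonneg (bpos a ha).le A)
      _ ≤ 2 ^ A * (t/(t+c)) ^ B * ((t/(t+b)) ^ B + (t/(t+a)) ^ A) := by
          apply mul_le_mul_of_nonneg_left _ (by positivity)
          simp only [le_add_iff_nonneg_left]
          positivity

lemma conv_bound {n : ℕ} {t A B : ℝ} (ht : 0 < t) (hB : 0 ≤ B) (hBA : B ≤ A) (u : E n) :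
    ∫⁻ y : E n, ENNReal.ofReal ((t/(t+‖y‖)) ^ A * (t/(t+‖u - y‖)) ^ B)
      ≤ ENNReal.ofReal (2 ^ A) * ENNReal.ofReal ((t/(t+‖u‖)) ^ B) * ENNReal.ofReal (t^n) *
        ((∫⁻ v : E n, ENNReal.ofReal ((1+‖v‖) ^ (-B)))
          + ∫⁻ v : E n, ENNReal.ofReal ((1+‖v‖) ^ (-A))) := by
  have step1 : ∫⁻ y : E n, ENNReal.ofReal ((t/(t+‖y‖)) ^ A * (t/(t+‖u - y‖)) ^ B)
      ≤ ∫⁻ y : E n, ENNReal.ofReal (2 ^ A * (t/(t+‖u‖)) ^ B *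
          ((t/(t+‖u - y‖)) ^ B + (t/(t+‖y‖)) ^ A)) := by
    refine lintegral_mono fun y => ENNReal.ofReal_le_ofReal ?_
    have : ‖u‖ ≤ ‖y‖ + ‖u - y‖ := by
      calc ‖u‖ = ‖y + (u - y)‖ := by rw [add_sub_cancel]
        _ ≤ ‖y‖ + ‖u - y‖ := norm_add_le _ _
    exact kernel_ptwise ht hB hBA (norm_nonneg _) (norm_nonneg _) (norm_nonneg _) this
  refine le_trans step1 ?_
  have hc : (0:ℝ) ≤ 2 ^ A * (t/(t+‖u‖)) ^ B := by positivity
  calc ∫⁻ y : E n, ENNReal.ofReal (2 ^ A * (t/(t+‖u‖)) ^ B *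
          ((t/(t+‖u - y‖)) ^ B + (t/(t+‖y‖)) ^ A))
      = ENNReal.ofReal (2 ^ A * (t/(t+‖u‖)) ^ B) *
        ∫⁻ y : E n, ENNReal.ofReal ((t/(t+‖u - y‖)) ^ B + (t/(t+‖y‖)) ^ A) := by
        rw [← lintegral_const_mul' _ _ ENNReal.ofReal_ne_top]
        refine lintegral_congr fun y => ?_
        rw [← ENNReal.ofReal_mul hc]
    _ = ENNReal.ofReal (2 ^ A * (t/(t+‖u‖)) ^ B) *
        ((∫⁻ y : E n, ENNReal.ofReal ((t/(t+‖u - y‖)) ^ B)) +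
          ∫⁻ y : E n, ENNReal.ofReal ((t/(t+‖y‖)) ^ A)) := by
        congr 1
        rw [← lintegral_add_left (by fun_prop)]
        refine lintegral_congr fun y => ?_
        rw [ENNReal.ofReal_add (by positivity) (by positivity)]
    _ = ENNReal.ofReal (2 ^ A) * ENNReal.ofReal ((t/(t+‖u‖)) ^ B) * ENNReal.ofReal (t^n) *
        ((∫⁻ v : E n, ENNReal.ofReal ((1+‖v‖) ^ (-B)))
          + ∫⁻ v : E n, ENNReal.ofReal ((1+‖v‖) ^ (-A))) := by
        rw [norm_int ht u, norm_int' ht, ENNReal.ofReal_mul (by positivity)]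
        ring
    _ ≤ ENNReal.ofReal (2 ^ A) * ENNReal.ofReal ((t/(t+‖u‖)) ^ B) * ENNReal.ofReal (t^n) *
        ((∫⁻ v : E n, ENNReal.ofReal ((1+‖v‖) ^ (-B)))
          + ∫⁻ v : E n, ENNReal.ofReal ((1+‖v‖) ^ (-A))) := le_rfl

lemma rpow_neg_nat {t : ℝ} (ht : 0 < t) (n : ℕ) : t ^ (-(n:ℝ)) = (t ^ n)⁻¹ := by
  rw [Real.rpow_neg ht.le, Real.rpow_natCast]

lemma conv_bound' {n : ℕ} {t A B : ℝ} (ht : 0 < t) (hB : 0 ≤ B) (hBA : B ≤ A) (u : E n) :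
    ∫⁻ y : E n, ENNReal.ofReal (t ^ (-(n:ℝ)) * ((t/(t+‖y‖)) ^ A * (t/(t+‖u - y‖)) ^ B))
      ≤ ENNReal.ofReal (2 ^ A) *
        ((∫⁻ v : E n, ENNReal.ofReal ((1+‖v‖) ^ (-B)))
          + ∫⁻ v : E n, ENNReal.ofReal ((1+‖v‖) ^ (-A))) *
        ENNReal.ofReal ((t/(t+‖u‖)) ^ B) := by
  have h1 : ∫⁻ y : E n, ENNReal.ofReal (t ^ (-(n:ℝ)) * ((t/(t+‖y‖)) ^ A * (t/(t+‖u - y‖)) ^ B))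
      = ENNReal.ofReal (t ^ (-(n:ℝ))) *
        ∫⁻ y : E n, ENNReal.ofReal ((t/(t+‖y‖)) ^ A * (t/(t+‖u - y‖)) ^ B) := by
    rw [← lintegral_const_mul' _ _ ENNReal.ofReal_ne_top]
    refine lintegral_congr fun y => ?_
    rw [← ENNReal.ofReal_mul (Real.rpow_nonneg ht.le _)]
  rw [h1]
  refine le_trans (mul_le_mul_right (conv_bound ht hB hBA u) _) (le_of_eq ?_)
  have h2 : ENNReal.ofReal (t ^ (-(n:ℝ))) * ENNReal.ofReal (t ^ n) = 1 := by
    rw [← ENNReal.ofReal_mul (Real.rpow_nonneg ht.le _), rpow_neg_nat ht n,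
      inv_mul_cancel₀ (by positivity)]
    exact ENNReal.ofReal_one
  calc ENNReal.ofReal (t ^ (-(n:ℝ))) *
        (ENNReal.ofReal (2 ^ A) * ENNReal.ofReal ((t/(t+‖u‖)) ^ B) * ENNReal.ofReal (t^n) *
          ((∫⁻ v : E n, ENNReal.ofReal ((1+‖v‖) ^ (-B)))
            + ∫⁻ v : E n, ENNReal.ofReal ((1+‖v‖) ^ (-A))))
      = (ENNReal.ofReal (t ^ (-(n:ℝ))) * ENNReal.ofReal (t ^ n)) *
        (ENNReal.ofReal (2 ^ A) *
          ((∫⁻ v : E n, ENNReal.ofReal ((1+‖v‖) ^ (-B)))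
            + ∫⁻ v : E n, ENNReal.ofReal ((1+‖v‖) ^ (-A))) *
          ENNReal.ofReal ((t/(t+‖u‖)) ^ B)) := by ring
    _ = _ := by rw [h2, one_mul]

lemma cs {α : Type*} [MeasurableSpace α] {μ : Measure α} {f g : α → ℝ≥0∞}
    (hf : AEMeasurable f μ) (hg : AEMeasurable g μ) :
    (∫⁻ a, f a * g a ∂μ) ^ 2 ≤ (∫⁻ a, (f a) ^ 2 ∂μ) * ∫⁻ a, (g a) ^ 2 ∂μ := by
  have hpq : Real.HolderConjugate 2 2 := Real.holderConjugate_iff.mpr ⟨by norm_num, by norm_num⟩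
  have h := ENNReal.lintegral_mul_le_Lp_mul_Lq μ hpq hf hg
  have h2 : (∫⁻ a, f a * g a ∂μ) ^ 2 ≤
      ((∫⁻ a, f a ^ (2:ℝ) ∂μ) ^ (1/(2:ℝ)) * (∫⁻ a, g a ^ (2:ℝ) ∂μ) ^ (1/(2:ℝ))) ^ 2 :=
    pow_le_pow_left' h 2
  refine le_trans h2 ?_
  rw [mul_pow]
  have hrw : ∀ x : ℝ≥0∞, (x ^ (1/(2:ℝ))) ^ 2 = x := fun x => by
    rw [← ENNReal.rpow_natCast (x ^ (1/(2:ℝ))) 2, ← ENNReal.rpow_mul]; norm_num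
  rw [hrw, hrw]
  simp_rw [← ENNReal.rpow_natCast _ 2]
  norm_num

lemma psiconv_sq_bound {n : ℕ} {α C₀ : ℝ} (hC₀ : 0 ≤ C₀) {ψ : E n → ℝ}
    (hψ : ∀ x : E n, |ψ x| ≤ C₀ * (1 + ‖x‖) ^ (-(n : ℝ) - α))
    {σ f : E n → ℝ} (hσm : Measurable σ) (hσ0 : ∀ z, 0 ≤ σ z) (hf : Measurable f)
    {t : ℝ} (ht : 0 < t) (u : E n) :
    ENNReal.ofReal (psiConv n ψ t (fun z => f z * σ z) u ^ 2) ≤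
      ENNReal.ofReal (C₀ ^ 2) * l2sq σ f *
        ∫⁻ z, ENNReal.ofReal
          ((t ^ (-(n : ℝ)) * (t/(t+‖u - z‖)) ^ ((n:ℝ)+α)) ^ 2 * σ z) := by
  set κ : E n → ℝ := fun z => t ^ (-(n : ℝ)) * (t/(t+‖u - z‖)) ^ ((n:ℝ)+α) with hκ
  have hκ0 : ∀ z, 0 ≤ κ z := fun z => by
    have h1 : (0:ℝ) ≤ t / (t + ‖u - z‖) := by positivity
    positivity
  have hκm : Measurable κ := by fun_prop
  have hptw : ∀ z : E n, |t ^ (-(n : ℝ)) * ψ (t⁻¹ • (u - z)) * (f z * σ z)|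
      ≤ (C₀ * κ z) * (|f z| * σ z) := by
    intro z
    have habs : |t ^ (-(n : ℝ)) * ψ (t⁻¹ • (u - z)) * (f z * σ z)|
        = t ^ (-(n : ℝ)) * |ψ (t⁻¹ • (u - z))| * (|f z| * σ z) := by
      rw [abs_mul, abs_mul, abs_mul, abs_of_nonneg (Real.rpow_nonneg ht.le _),
        abs_of_nonneg (hσ0 z)]
    rw [habs]
    have hψ' : |ψ (t⁻¹ • (u - z))| ≤ C₀ * (t/(t+‖u - z‖)) ^ ((n:ℝ)+α) := by
      have h1 := hψ (t⁻¹ • (u - z))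
      have hnorm : ‖t⁻¹ • (u - z)‖ = ‖u - z‖ / t := by
        rw [norm_smul, norm_inv, Real.norm_eq_abs, abs_of_pos ht, inv_mul_eq_div]
      rw [hnorm] at h1
      have h2 : (t/(t+‖u - z‖)) ^ ((n:ℝ)+α) = (1 + ‖u - z‖/t) ^ (-((n:ℝ)+α)) :=
        kk_eq ht (norm_nonneg _)
      rw [h2]
      have h3 : -(n:ℝ) - α = -((n:ℝ)+α) := by ring
      rwa [h3] at h1
    calc t ^ (-(n : ℝ)) * |ψ (t⁻¹ • (u - z))| * (|f z| * σ z)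
        ≤ t ^ (-(n : ℝ)) * (C₀ * (t/(t+‖u - z‖)) ^ ((n:ℝ)+α)) * (|f z| * σ z) := by
          apply mul_le_mul_of_nonneg_right _ (mul_nonneg (abs_nonneg _) (hσ0 z))
          exact mul_le_mul_of_nonneg_left hψ' (Real.rpow_nonneg ht.le _)
      _ = (C₀ * κ z) * (|f z| * σ z) := by rw [hκ]; ring
  have h1 : ENNReal.ofReal |psiConv n ψ t (fun z => f z * σ z) u|
      ≤ ∫⁻ z, ENNReal.ofReal ((|f z| * Real.sqrt (σ z)) * ((C₀ * κ z) * Real.sqrt (σ z))) := by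
    rw [← Real.enorm_eq_ofReal_abs]
    refine le_trans (MeasureTheory.enorm_integral_le_lintegral_enorm _) ?_
    refine lintegral_mono fun z => ?_
    rw [Real.enorm_eq_ofReal_abs]
    refine ENNReal.ofReal_le_ofReal ?_
    refine le_trans (hptw z) (le_of_eq ?_)
    have hss : Real.sqrt (σ z) * Real.sqrt (σ z) = σ z := Real.mul_self_sqrt (hσ0 z)
    have hrhs : |f z| * Real.sqrt (σ z) * ((C₀ * κ z) * Real.sqrt (σ z))
        = C₀ * κ z * (|f z| * (Real.sqrt (σ z) * Real.sqrt (σ z))) := by ring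
    rw [hrhs, hss]
  have h2 : (∫⁻ z, ENNReal.ofReal ((|f z| * Real.sqrt (σ z)) * ((C₀ * κ z) * Real.sqrt (σ z)))) ^ 2
      ≤ (∫⁻ z, ENNReal.ofReal ((|f z| * Real.sqrt (σ z)) ^ 2)) *
        ∫⁻ z, ENNReal.ofReal (((C₀ * κ z) * Real.sqrt (σ z)) ^ 2) := by
    have hcs := cs (μ := (volume : Measure (E n)))
      (f := fun z => ENNReal.ofReal (|f z| * Real.sqrt (σ z)))
      (g := fun z => ENNReal.ofReal ((C₀ * κ z) * Real.sqrt (σ z)))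
      (by fun_prop) (by fun_prop)
    calc (∫⁻ z, ENNReal.ofReal ((|f z| * Real.sqrt (σ z)) * ((C₀ * κ z) * Real.sqrt (σ z)))) ^ 2
        = (∫⁻ z, ENNReal.ofReal (|f z| * Real.sqrt (σ z)) *
            ENNReal.ofReal ((C₀ * κ z) * Real.sqrt (σ z))) ^ 2 := by
          congr 1; refine lintegral_congr fun z => ?_
          rw [ENNReal.ofReal_mul (by positivity)]
      _ ≤ (∫⁻ z, ENNReal.ofReal (|f z| * Real.sqrt (σ z)) ^ 2) *
            ∫⁻ z, ENNReal.ofReal ((C₀ * κ z) * Real.sqrt (σ z)) ^ 2 := hcs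
      _ = (∫⁻ z, ENNReal.ofReal ((|f z| * Real.sqrt (σ z)) ^ 2)) *
            ∫⁻ z, ENNReal.ofReal (((C₀ * κ z) * Real.sqrt (σ z)) ^ 2) := by
          congr 1 <;> refine lintegral_congr fun z => ?_ <;>
            rw [ENNReal.ofReal_pow (by positivity)]
  have hL : (∫⁻ z, ENNReal.ofReal ((|f z| * Real.sqrt (σ z)) ^ 2)) = l2sq σ f := by
    refine lintegral_congr fun z => ?_
    rw [mul_pow, sq_abs, Real.sq_sqrt (hσ0 z)]
  have hR : (∫⁻ z, ENNReal.ofReal (((C₀ * κ z) * Real.sqrt (σ z)) ^ 2))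
      = ENNReal.ofReal (C₀ ^ 2) * ∫⁻ z, ENNReal.ofReal ((κ z) ^ 2 * σ z) := by
    rw [← lintegral_const_mul' _ _ ENNReal.ofReal_ne_top]
    refine lintegral_congr fun z => ?_
    rw [← ENNReal.ofReal_mul (by positivity)]
    congr 1
    rw [mul_pow, mul_pow, Real.sq_sqrt (hσ0 z)]
    ring
  calc ENNReal.ofReal (psiConv n ψ t (fun z => f z * σ z) u ^ 2)
      = ENNReal.ofReal (|psiConv n ψ t (fun z => f z * σ z) u| ^ 2) := by rw [sq_abs]
    _ = ENNReal.ofReal (|psiConv n ψ t (fun z => f z * σ z) u|) ^ 2 :=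
        ENNReal.ofReal_pow (abs_nonneg _) 2
    _ ≤ (∫⁻ z, ENNReal.ofReal ((|f z| * Real.sqrt (σ z)) * ((C₀ * κ z) * Real.sqrt (σ z)))) ^ 2 :=
        pow_le_pow_left' h1 2
    _ ≤ (∫⁻ z, ENNReal.ofReal ((|f z| * Real.sqrt (σ z)) ^ 2)) *
          ∫⁻ z, ENNReal.ofReal (((C₀ * κ z) * Real.sqrt (σ z)) ^ 2) := h2
    _ = ENNReal.ofReal (C₀ ^ 2) * l2sq σ f * ∫⁻ z, ENNReal.ofReal ((κ z) ^ 2 * σ z) := by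
        rw [hL, hR]; ring
    _ = ENNReal.ofReal (C₀ ^ 2) * l2sq σ f *
          ∫⁻ z, ENNReal.ofReal ((t ^ (-(n : ℝ)) * (t/(t+‖u - z‖)) ^ ((n:ℝ)+α)) ^ 2 * σ z) := rfl

end WRCS


namespace WRCS

lemma ksq {n : ℕ} {α t d : ℝ} (ht : 0 < t) (hd : 0 ≤ d) :
    (t ^ (-(n:ℝ)) * (t/(t+d)) ^ ((n:ℝ)+α)) ^ 2
      = t ^ (-(2*(n:ℝ))) * (t/(t+d)) ^ (2*((n:ℝ)+α)) := by
  have hb : (0:ℝ) ≤ t/(t+d) := by positivity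
  rw [mul_pow]
  congr 1
  · rw [← Real.rpow_natCast (t ^ (-(n:ℝ))) 2, ← Real.rpow_mul ht.le]
    norm_num
    ring_nf
  · rw [← Real.rpow_natCast ((t/(t+d)) ^ ((n:ℝ)+α)) 2, ← Real.rpow_mul hb]
    norm_num
    ring_nf

lemma comp_bound {n : ℕ} {α t ℓ dd s B : ℝ} (hα0 : 0 < α) (hB : B = 2*((n:ℝ)+α))
    (hℓ : 0 < ℓ) (ht1 : ℓ/2 < t) (ht2 : t ≤ ℓ) (hd : 0 ≤ dd) (hdist : dd ≤ s) (hs : 0 ≤ s) :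
    t ^ (-(2*(n:ℝ))) * (t/(t+s)) ^ B ≤ 2 ^ B * (ℓ ^ (2*α) / (ℓ + dd) ^ B) := by
  have ht : 0 < t := lt_trans (by positivity) ht1
  have h1 : t ^ (-(2*(n:ℝ))) * (t/(t+s)) ^ B = t ^ (2*α) * (t+s) ^ (-B) := by
    rw [Real.div_rpow ht.le (by positivity), div_eq_mul_inv, ← Real.rpow_neg (by positivity)]
    rw [← mul_assoc, ← Real.rpow_add ht]
    congr 2
    rw [hB]; ring
  rw [h1]
  have h2 : t ^ (2*α) ≤ ℓ ^ (2*α) := Real.rpow_le_rpow ht.le ht2 (by positivity)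
  have h3 : (t+s) ^ (-B) ≤ 2 ^ B * (ℓ + dd) ^ (-B) := by
    have hB0 : 0 ≤ B := by rw [hB]; positivity
    have hhalf : (ℓ + dd)/2 ≤ t + s := by linarith
    have h4 : (t+s) ^ (-B) ≤ ((ℓ + dd)/2) ^ (-B) :=
      Real.rpow_le_rpow_of_nonpos (by positivity) hhalf (by linarith)
    refine le_trans h4 (le_of_eq ?_)
    rw [Real.rpow_neg (by positivity : (0:ℝ) ≤ (ℓ+dd)/2), Real.rpow_neg (by positivity : (0:ℝ) ≤ ℓ+dd),
      Real.div_rpow (by positivity) (by norm_num), inv_div, div_eq_mul_inv]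
  calc t ^ (2*α) * (t+s) ^ (-B) ≤ ℓ ^ (2*α) * (2 ^ B * (ℓ + dd) ^ (-B)) := by
        apply mul_le_mul h2 h3 (by positivity) (by positivity)
    _ = 2 ^ B * (ℓ ^ (2*α) / (ℓ + dd) ^ B) := by
        rw [Real.rpow_neg (by positivity), div_eq_mul_inv]
        ring

lemma cube_measurableSet {n : ℕ} (R : Cube n) : MeasurableSet R.set := by
  have h : R.set = ⋂ i, ({x : E n | R.corner i ≤ x i} ∩ {x : E n | x i < R.corner i + R.side}) := by
    ext x
    simp only [Cube.set, Set.mem_setOf_eq, Set.mem_iInter, Set.mem_inter_iff]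
  rw [h]
  refine MeasurableSet.iInter fun i => ?_
  have hev : Measurable fun x : E n => x i := by fun_prop
  exact (measurableSet_le measurable_const hev).inter (measurableSet_lt hev measurable_const)

lemma cube_bounded {n : ℕ} (R : Cube n) : Bornology.IsBounded R.set := by
  rw [Metric.isBounded_iff_subset_closedBall R.corner]
  refine ⟨Real.sqrt (n * R.side^2), fun x hx => ?_⟩
  rw [Metric.mem_closedBall, EuclideanSpace.dist_eq]
  refine Real.sqrt_le_sqrt ?_
  have h1 : ∀ i, dist (x i) (R.corner i) ^ 2 ≤ R.side ^ 2 := by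
    intro i
    obtain ⟨h2, h3⟩ := hx i
    rw [Real.dist_eq, sq_abs]
    nlinarith [R.side_pos]
  calc ∑ i, dist (x i) (R.corner i) ^ 2 ≤ ∑ _i : Fin n, R.side ^ 2 :=
        Finset.sum_le_sum fun i _ => h1 i
    _ = n * R.side ^ 2 := by simp [mul_comm]

lemma cInt_w {n : ℕ} {w : E n → ℝ} (hw : IsWeight w) (R : Cube n) :
    ∫⁻ x in R.set, ENNReal.ofReal (w x) = ENNReal.ofReal (cInt w R) := by
  have hK : IsCompact (closure R.set) := (cube_bounded R).isCompact_closure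
  have hInt : IntegrableOn w R.set := (hw.2.integrableOn_isCompact hK).mono_set subset_closure
  rw [cInt, MeasureTheory.ofReal_integral_eq_lintegral_ofReal hInt
    (Filter.Eventually.of_forall fun x => hw.1 x)]

lemma main_meas {n : ℕ} {α lam : ℝ} (hα0 : 0 < α)
    (hBA : 2*((n:ℝ)+α) ≤ (n:ℝ) * lam) {C₀ : ℝ} (hC₀ : 0 ≤ C₀) {ψ : E n → ℝ}
    (hψ : ∀ x : E n, |ψ x| ≤ C₀ * (1 + ‖x‖) ^ (-(n : ℝ) - α))
    {σ w : E n → ℝ} (hσm : Measurable σ) (hσ0 : ∀ z, 0 ≤ σ z) (hw : IsWeight w)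
    (R : Cube n) (f : E n → ℝ) (hf : Measurable f) (hL : l2sq σ f ≠ ⊤) :
    (∫⁻ t in Set.Ioc (R.side / 2) R.side, ∫⁻ x in R.set, ∫⁻ y : E n,
        ENNReal.ofReal
          (psiConv n ψ t (fun z => f z * σ z) (x - y) ^ 2 *
            (t / (t + ‖y‖)) ^ ((n : ℝ) * lam) / t ^ (n : ℝ) * w x / t))
      ≤ ENNReal.ofReal (C₀^2) * ENNReal.ofReal ((2:ℝ) ^ ((n:ℝ)*lam)) *
          ((∫⁻ v : E n, ENNReal.ofReal ((1+‖v‖) ^ (-(2*((n:ℝ)+α))))) +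
            ∫⁻ v : E n, ENNReal.ofReal ((1+‖v‖) ^ (-((n:ℝ)*lam)))) *
          ENNReal.ofReal ((2:ℝ) ^ (2*((n:ℝ)+α))) *
          l2sq σ f * ENNReal.ofReal (cInt w R) *
          ∫⁻ z, ENNReal.ofReal
            (R.side ^ (2 * α) /
              (R.side + Metric.infDist z R.set) ^ (2 * ((n : ℝ) + α)) * σ z) := by
  set ℓ := R.side with hℓdef
  have hℓ : 0 < ℓ := R.side_pos
  set A := (n:ℝ) * lam with hA
  set B := 2*((n:ℝ)+α) with hB
  have hB0 : (0:ℝ) ≤ B := by rw [hB]; positivity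
  set IB := ∫⁻ v : E n, ENNReal.ofReal ((1+‖v‖) ^ (-B)) with hIB
  set IA := ∫⁻ v : E n, ENNReal.ofReal ((1+‖v‖) ^ (-A)) with hIA
  set L := l2sq σ f with hLdef
  set J := ∫⁻ z, ENNReal.ofReal
      (ℓ ^ (2 * α) / (ℓ + Metric.infDist z R.set) ^ (2 * ((n : ℝ) + α)) * σ z) with hJ
  set D₀ : ℝ≥0∞ := ENNReal.ofReal ((2:ℝ) ^ A) * (IB + IA) * ENNReal.ofReal ((2:ℝ) ^ B) * J
    with hD₀
  -- the per-t bound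
  have hper : ∀ t ∈ Set.Ioc (ℓ/2) ℓ,
      (∫⁻ x in R.set, ∫⁻ y : E n,
        ENNReal.ofReal
          (psiConv n ψ t (fun z => f z * σ z) (x - y) ^ 2 *
            (t / (t + ‖y‖)) ^ A / t ^ (n : ℝ) * w x / t))
      ≤ ENNReal.ofReal (2/ℓ) *
          (ENNReal.ofReal (cInt w R) * (ENNReal.ofReal (C₀^2) * L * D₀)) := by
    intro t htmem
    obtain ⟨ht1, ht2⟩ := htmem
    have ht : 0 < t := lt_trans (by positivity) ht1
    -- inner convolution bound, for x ∈ R.set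
    have hInner : ∀ x ∈ R.set,
        (∫⁻ y : E n, ENNReal.ofReal ((t / (t + ‖y‖)) ^ A / t ^ (n : ℝ)) *
          ∫⁻ z, ENNReal.ofReal
            ((t ^ (-(n : ℝ)) * (t/(t+‖(x - y) - z‖)) ^ ((n:ℝ)+α)) ^ 2 * σ z))
        ≤ D₀ := by
      intro x hx
      have hrw : ∀ y : E n,
          ENNReal.ofReal ((t / (t + ‖y‖)) ^ A / t ^ (n : ℝ)) *
            ∫⁻ z, ENNReal.ofReal
              ((t ^ (-(n : ℝ)) * (t/(t+‖(x - y) - z‖)) ^ ((n:ℝ)+α)) ^ 2 * σ z)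
          = ∫⁻ z, ENNReal.ofReal (t ^ (-(n:ℝ)) *
                ((t/(t+‖y‖)) ^ A * (t/(t+‖(x - z) - y‖)) ^ B)) *
              ENNReal.ofReal (t ^ (-(2*(n:ℝ))) * σ z) := by
        intro y
        rw [← lintegral_const_mul' _ _ ENNReal.ofReal_ne_top]
        refine lintegral_congr fun z => ?_
        rw [← ENNReal.ofReal_mul (by positivity), ← ENNReal.ofReal_mul (by positivity)]
        congr 1
        rw [ksq ht (norm_nonneg _), sub_right_comm, div_eq_mul_inv, ← Real.rpow_neg ht.le]
        ring
    -- swap and conv bound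
      have hswap : (∫⁻ y : E n, ∫⁻ z, ENNReal.ofReal (t ^ (-(n:ℝ)) *
              ((t/(t+‖y‖)) ^ A * (t/(t+‖(x - z) - y‖)) ^ B)) *
            ENNReal.ofReal (t ^ (-(2*(n:ℝ))) * σ z))
          = ∫⁻ z, ∫⁻ y : E n, ENNReal.ofReal (t ^ (-(n:ℝ)) *
              ((t/(t+‖y‖)) ^ A * (t/(t+‖(x - z) - y‖)) ^ B)) *
            ENNReal.ofReal (t ^ (-(2*(n:ℝ))) * σ z) := by
        refine lintegral_lintegral_swap ?_
        apply Measurable.aemeasurable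
        fun_prop
      calc (∫⁻ y : E n, ENNReal.ofReal ((t / (t + ‖y‖)) ^ A / t ^ (n : ℝ)) *
            ∫⁻ z, ENNReal.ofReal
              ((t ^ (-(n : ℝ)) * (t/(t+‖(x - y) - z‖)) ^ ((n:ℝ)+α)) ^ 2 * σ z))
          = ∫⁻ y : E n, ∫⁻ z, ENNReal.ofReal (t ^ (-(n:ℝ)) *
                ((t/(t+‖y‖)) ^ A * (t/(t+‖(x - z) - y‖)) ^ B)) *
              ENNReal.ofReal (t ^ (-(2*(n:ℝ))) * σ z) := lintegral_congr hrw
        _ = ∫⁻ z, ∫⁻ y : E n, ENNReal.ofReal (t ^ (-(n:ℝ)) *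
                ((t/(t+‖y‖)) ^ A * (t/(t+‖(x - z) - y‖)) ^ B)) *
              ENNReal.ofReal (t ^ (-(2*(n:ℝ))) * σ z) := hswap
        _ ≤ ∫⁻ z, (ENNReal.ofReal ((2:ℝ) ^ A) * (IB + IA) *
              ENNReal.ofReal ((t/(t+‖x - z‖)) ^ B)) *
              ENNReal.ofReal (t ^ (-(2*(n:ℝ))) * σ z) := by
            refine lintegral_mono fun z => ?_
            rw [lintegral_mul_const' _ _ ENNReal.ofReal_ne_top]
            exact mul_le_mul_left (conv_bound' ht hB0 hBA (x - z)) _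
        _ ≤ ∫⁻ z, (ENNReal.ofReal ((2:ℝ) ^ A) * (IB + IA)) *
              ENNReal.ofReal ((2:ℝ) ^ B * (ℓ ^ (2 * α) /
                (ℓ + Metric.infDist z R.set) ^ (2 * ((n : ℝ) + α)) * σ z)) := by
            refine lintegral_mono fun z => ?_
            rw [mul_assoc (ENNReal.ofReal ((2:ℝ) ^ A) * (IB + IA))]
            refine mul_le_mul_right ?_ _
            rw [← ENNReal.ofReal_mul (by positivity)]
            refine ENNReal.ofReal_le_ofReal ?_
            have hd0 : 0 ≤ Metric.infDist z R.set := Metric.infDist_nonneg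
            have hds : Metric.infDist z R.set ≤ ‖x - z‖ := by
              have h5 := Metric.infDist_le_dist_of_mem (x := z) hx
              rwa [dist_comm, dist_eq_norm] at h5
            have hcb := comp_bound (n := n) hα0 hB hℓ ht1 ht2 hd0 hds (norm_nonneg _)
            calc (t/(t+‖x - z‖)) ^ B * (t ^ (-(2*(n:ℝ))) * σ z)
                = (t ^ (-(2*(n:ℝ))) * (t/(t+‖x - z‖)) ^ B) * σ z := by ring
              _ ≤ (2 ^ B * (ℓ ^ (2*α) / (ℓ + Metric.infDist z R.set) ^ B)) * σ z :=
                  mul_le_mul_of_nonneg_right hcb (hσ0 z)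
              _ = 2 ^ B * (ℓ ^ (2 * α) /
                    (ℓ + Metric.infDist z R.set) ^ (2 * ((n : ℝ) + α)) * σ z) := by
                  rw [hB]; ring
        _ = D₀ := by
            rw [lintegral_const_mul'' _ ((by fun_prop : Measurable fun z : E n =>
                ENNReal.ofReal ((2:ℝ) ^ B * (ℓ ^ (2 * α) /
                  (ℓ + Metric.infDist z R.set) ^ (2 * ((n : ℝ) + α)) * σ z))).aemeasurable)]
            have hsplit2 : ∀ z : E n, ENNReal.ofReal ((2:ℝ) ^ B * (ℓ ^ (2 * α) /
                  (ℓ + Metric.infDist z R.set) ^ (2 * ((n : ℝ) + α)) * σ z))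
                = ENNReal.ofReal ((2:ℝ) ^ B) * ENNReal.ofReal (ℓ ^ (2 * α) /
                  (ℓ + Metric.infDist z R.set) ^ (2 * ((n : ℝ) + α)) * σ z) :=
              fun z => ENNReal.ofReal_mul (by positivity)
            rw [lintegral_congr hsplit2, lintegral_const_mul' _ _ ENNReal.ofReal_ne_top, hD₀, hJ]
            ring
    -- now the x-integral
    have hx_bound : ∀ x ∈ R.set,
        (∫⁻ y : E n, ENNReal.ofReal
          (psiConv n ψ t (fun z => f z * σ z) (x - y) ^ 2 *
            (t / (t + ‖y‖)) ^ A / t ^ (n : ℝ) * w x / t))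
        ≤ ENNReal.ofReal (w x) * (ENNReal.ofReal (2/ℓ) * (ENNReal.ofReal (C₀^2) * L * D₀)) := by
      intro x hx
      have hsplit : ∀ y : E n,
          ENNReal.ofReal
            (psiConv n ψ t (fun z => f z * σ z) (x - y) ^ 2 *
              (t / (t + ‖y‖)) ^ A / t ^ (n : ℝ) * w x / t)
          = ENNReal.ofReal (w x) * (ENNReal.ofReal t⁻¹ *
              (ENNReal.ofReal ((t / (t + ‖y‖)) ^ A / t ^ (n : ℝ)) *
                ENNReal.ofReal (psiConv n ψ t (fun z => f z * σ z) (x - y) ^ 2))) := by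
        intro y
        rw [← ENNReal.ofReal_mul (by positivity), ← ENNReal.ofReal_mul (by positivity),
          ← ENNReal.ofReal_mul (hw.1 x)]
        congr 1
        field_simp
      calc (∫⁻ y : E n, ENNReal.ofReal
            (psiConv n ψ t (fun z => f z * σ z) (x - y) ^ 2 *
              (t / (t + ‖y‖)) ^ A / t ^ (n : ℝ) * w x / t))
          = ENNReal.ofReal (w x) * (ENNReal.ofReal t⁻¹ *
              ∫⁻ y : E n, ENNReal.ofReal ((t / (t + ‖y‖)) ^ A / t ^ (n : ℝ)) *
                ENNReal.ofReal (psiConv n ψ t (fun z => f z * σ z) (x - y) ^ 2)) := by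
            rw [← lintegral_const_mul' _ _ ENNReal.ofReal_ne_top,
              ← lintegral_const_mul' _ _ ENNReal.ofReal_ne_top]
            exact lintegral_congr hsplit
        _ ≤ ENNReal.ofReal (w x) * (ENNReal.ofReal t⁻¹ * (ENNReal.ofReal (C₀^2) * L * D₀)) := by
            refine mul_le_mul_right (mul_le_mul_right ?_ _) _
            calc (∫⁻ y : E n, ENNReal.ofReal ((t / (t + ‖y‖)) ^ A / t ^ (n : ℝ)) *
                  ENNReal.ofReal (psiConv n ψ t (fun z => f z * σ z) (x - y) ^ 2))
                ≤ ∫⁻ y : E n, ENNReal.ofReal ((t / (t + ‖y‖)) ^ A / t ^ (n : ℝ)) *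
                    (ENNReal.ofReal (C₀ ^ 2) * l2sq σ f *
                      ∫⁻ z, ENNReal.ofReal
                        ((t ^ (-(n : ℝ)) * (t/(t+‖(x - y) - z‖)) ^ ((n:ℝ)+α)) ^ 2 * σ z)) := by
                  refine lintegral_mono fun y => ?_
                  exact mul_le_mul_right (psiconv_sq_bound hC₀ hψ hσm hσ0 hf ht (x - y)) _
              _ = ENNReal.ofReal (C₀ ^ 2) * L *
                    ∫⁻ y : E n, ENNReal.ofReal ((t / (t + ‖y‖)) ^ A / t ^ (n : ℝ)) *
                      ∫⁻ z, ENNReal.ofReal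
                        ((t ^ (-(n : ℝ)) * (t/(t+‖(x - y) - z‖)) ^ ((n:ℝ)+α)) ^ 2 * σ z) := by
                  rw [← lintegral_const_mul' _ _ (ENNReal.mul_ne_top ENNReal.ofReal_ne_top hL)]
                  refine lintegral_congr fun y => ?_
                  rw [← hLdef]; ring
              _ ≤ ENNReal.ofReal (C₀ ^ 2) * L * D₀ :=
                  mul_le_mul_right (hInner x hx) _
        _ ≤ ENNReal.ofReal (w x) * (ENNReal.ofReal (2/ℓ) * (ENNReal.ofReal (C₀^2) * L * D₀)) := by
            refine mul_le_mul_right (mul_le_mul_left ?_ _) _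
            refine ENNReal.ofReal_le_ofReal ?_
            rw [inv_le_iff_one_le_mul₀ ht]
            rw [div_mul_eq_mul_div, le_div_iff₀ hℓ]
            linarith
    calc (∫⁻ x in R.set, ∫⁻ y : E n,
          ENNReal.ofReal
            (psiConv n ψ t (fun z => f z * σ z) (x - y) ^ 2 *
              (t / (t + ‖y‖)) ^ A / t ^ (n : ℝ) * w x / t))
        ≤ ∫⁻ x in R.set, ENNReal.ofReal (w x) *
            (ENNReal.ofReal (2/ℓ) * (ENNReal.ofReal (C₀^2) * L * D₀)) :=
          setLIntegral_mono' (cube_measurableSet R) hx_bound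
      _ = (∫⁻ x in R.set, ENNReal.ofReal (w x)) *
            (ENNReal.ofReal (2/ℓ) * (ENNReal.ofReal (C₀^2) * L * D₀)) := by
          refine lintegral_mul_const'' _ ?_
          exact (ENNReal.measurable_ofReal.comp_aemeasurable
            (hw.2.aestronglyMeasurable.aemeasurable.restrict))
      _ = ENNReal.ofReal (2/ℓ) * (ENNReal.ofReal (cInt w R) * (ENNReal.ofReal (C₀^2) * L * D₀)) := by
          rw [cInt_w hw R]; ring
  calc (∫⁻ t in Set.Ioc (ℓ/2) ℓ, ∫⁻ x in R.set, ∫⁻ y : E n,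
        ENNReal.ofReal
          (psiConv n ψ t (fun z => f z * σ z) (x - y) ^ 2 *
            (t / (t + ‖y‖)) ^ A / t ^ (n : ℝ) * w x / t))
      ≤ ∫⁻ _t in Set.Ioc (ℓ/2) ℓ, ENNReal.ofReal (2/ℓ) *
          (ENNReal.ofReal (cInt w R) * (ENNReal.ofReal (C₀^2) * L * D₀)) :=
        setLIntegral_mono' measurableSet_Ioc hper
    _ = (ENNReal.ofReal (2/ℓ) *
          (ENNReal.ofReal (cInt w R) * (ENNReal.ofReal (C₀^2) * L * D₀))) *
          volume (Set.Ioc (ℓ/2) ℓ) := setLIntegral_const _ _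
    _ = (ENNReal.ofReal (2/ℓ) * ENNReal.ofReal (ℓ/2)) *
          (ENNReal.ofReal (cInt w R) * (ENNReal.ofReal (C₀^2) * L * D₀)) := by
        rw [Real.volume_Ioc]
        have : ℓ - ℓ/2 = ℓ/2 := by ring
        rw [this]; ring
    _ = ENNReal.ofReal (cInt w R) * (ENNReal.ofReal (C₀^2) * L * D₀) := by
        rw [← ENNReal.ofReal_mul (by positivity)]
        have : 2/ℓ * (ℓ/2) = 1 := by field_simp
        rw [this, ENNReal.ofReal_one, one_mul]
    _ = ENNReal.ofReal (C₀^2) * ENNReal.ofReal ((2:ℝ) ^ A) * (IB + IA) *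
          ENNReal.ofReal ((2:ℝ) ^ B) * L * ENNReal.ofReal (cInt w R) * J := by
        rw [hD₀]; ring

end WRCS


/-- Cauchy–Schwarz bound on a single Whitney region:
`∬_{W_R} ∫ |ψ_t*(fσ)(x−y)|² (t/(t+|y|))^{nλ} (dy/tⁿ) w dx (dt/t)
  ≤ C ‖f‖²_{L²(σ)} w(R) ∫ ℓ(R)^{2α}(ℓ(R)+dist(z,R))^{−2(n+α)} σ(z) dz`. -/
theorem whitney_region_cauchy_schwarz
    (n : ℕ) (hn : 2 ≤ n) (α lam : ℝ) (hlam : 2 < lam)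
    (hα0 : 0 < α) (hα : α ≤ n * (lam - 2) / 2) :
    ∀ C₀ : ℝ, 0 ≤ C₀ → ∃ C : ℝ, 0 < C ∧
      ∀ ψ : E n → ℝ, (∀ x : E n, |ψ x| ≤ C₀ * (1 + ‖x‖) ^ (-(n : ℝ) - α)) →
        ∀ σ w : E n → ℝ, IsWeight σ → IsWeight w →
          ∀ R : Cube n, ∀ f : E n → ℝ, Measurable f → l2sq σ f < ⊤ →
            (∫⁻ t in Set.Ioc (R.side / 2) R.side, ∫⁻ x in R.set, ∫⁻ y : E n,
                ENNReal.ofReal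
                  (psiConv n ψ t (fun z => f z * σ z) (x - y) ^ 2 *
                    (t / (t + ‖y‖)) ^ ((n : ℝ) * lam) / t ^ (n : ℝ) * w x / t))
              ≤ ENNReal.ofReal C * l2sq σ f * ENNReal.ofReal (cInt w R) *
                  ∫⁻ z, ENNReal.ofReal
                    (R.side ^ (2 * α) /
                        (R.side + Metric.infDist z R.set) ^ (2 * ((n : ℝ) + α)) * σ z) := by
  intro C₀ hC₀
  have hn0 : (2:ℝ) ≤ (n:ℝ) := by exact_mod_cast hn
  set A := (n:ℝ) * lam with hA
  set B := 2*((n:ℝ)+α) with hB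
  have hBA : B ≤ A := by
    have h2 : (n:ℝ)*(lam-2)/2 = ((n:ℝ)*lam - 2*(n:ℝ))/2 := by ring
    rw [h2] at hα
    rw [hB, hA]
    linarith
  have hnB : (n:ℝ) < B := by rw [hB]; linarith
  have hnA : (n:ℝ) < A := lt_of_lt_of_le hnB hBA
  have hIBfin : (∫⁻ v : E n, ENNReal.ofReal ((1+‖v‖) ^ (-B))) < ⊤ :=
    finite_integral_one_add_norm (by rw [finrank_euclideanSpace_fin]; exact hnB)
  have hIAfin : (∫⁻ v : E n, ENNReal.ofReal ((1+‖v‖) ^ (-A))) < ⊤ :=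
    finite_integral_one_add_norm (by rw [finrank_euclideanSpace_fin]; exact hnA)
  set IB := ∫⁻ v : E n, ENNReal.ofReal ((1+‖v‖) ^ (-B)) with hIBdef
  set IA := ∫⁻ v : E n, ENNReal.ofReal ((1+‖v‖) ^ (-A)) with hIAdef
  have hsumfin : IB + IA ≠ ⊤ := by
    simp only [ne_eq, ENNReal.add_eq_top, not_or]
    exact ⟨hIBfin.ne, hIAfin.ne⟩
  set C : ℝ := C₀^2 * 2^A * 2^B * (IB + IA).toReal + 1 with hC
  have hC0 : 0 ≤ C₀^2 * 2^A * 2^B * (IB + IA).toReal := by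
    refine mul_nonneg (mul_nonneg (mul_nonneg (sq_nonneg _) ?_) ?_) ENNReal.toReal_nonneg
    · exact (Real.rpow_pos_of_pos (by norm_num) A).le
    · exact (Real.rpow_pos_of_pos (by norm_num) B).le
  refine ⟨C, by rw [hC]; linarith, ?_⟩
  intro ψ hψ σ w hσ hw R f hf hfL2
  -- replace σ by a measurable nonnegative representative
  have hsm := hσ.2.aestronglyMeasurable
  set σ' : E n → ℝ := fun z => max (hsm.mk σ z) 0 with hσ'def
  have hσ'm : Measurable σ' := (hsm.stronglyMeasurable_mk.measurable).max measurable_const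
  have hσ'0 : ∀ z, 0 ≤ σ' z := fun z => le_max_right _ _
  have hσeq : σ =ᵐ[(volume : Measure (E n))] σ' := by
    filter_upwards [hsm.ae_eq_mk] with z hz
    rw [hσ'def]
    simp only
    rw [← hz, max_eq_left (hσ.1 z)]
  have hpsi : ∀ t : ℝ, ∀ u : E n, psiConv n ψ t (fun z => f z * σ z) u
      = psiConv n ψ t (fun z => f z * σ' z) u := by
    intro t u
    unfold psiConv
    refine integral_congr_ae ?_
    filter_upwards [hσeq] with z hz
    rw [hz]
  have hl2 : l2sq σ f = l2sq σ' f := by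
    unfold l2sq
    refine lintegral_congr_ae ?_
    filter_upwards [hσeq] with z hz
    rw [hz]
  have hJeq : (∫⁻ z, ENNReal.ofReal (R.side ^ (2 * α) /
        (R.side + Metric.infDist z R.set) ^ (2 * ((n : ℝ) + α)) * σ z))
      = ∫⁻ z, ENNReal.ofReal (R.side ^ (2 * α) /
        (R.side + Metric.infDist z R.set) ^ (2 * ((n : ℝ) + α)) * σ' z) := by
    refine lintegral_congr_ae ?_
    filter_upwards [hσeq] with z hz
    rw [hz]
  have hLHSeq : (∫⁻ t in Set.Ioc (R.side / 2) R.side, ∫⁻ x in R.set, ∫⁻ y : E n,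
        ENNReal.ofReal
          (psiConv n ψ t (fun z => f z * σ z) (x - y) ^ 2 *
            (t / (t + ‖y‖)) ^ ((n : ℝ) * lam) / t ^ (n : ℝ) * w x / t))
      = ∫⁻ t in Set.Ioc (R.side / 2) R.side, ∫⁻ x in R.set, ∫⁻ y : E n,
        ENNReal.ofReal
          (psiConv n ψ t (fun z => f z * σ' z) (x - y) ^ 2 *
            (t / (t + ‖y‖)) ^ ((n : ℝ) * lam) / t ^ (n : ℝ) * w x / t) := by
    refine lintegral_congr fun t => lintegral_congr fun x => lintegral_congr fun y => ?_
    rw [hpsi t (x - y)]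
  rw [hLHSeq, hl2, hJeq]
  have hLne : l2sq σ' f ≠ ⊤ := by rw [← hl2]; exact hfL2.ne
  refine le_trans (WRCS.main_meas hα0 hBA hC₀ hψ hσ'm hσ'0 hw R f hf hLne) ?_
  have hconst : ENNReal.ofReal (C₀^2) * ENNReal.ofReal ((2:ℝ) ^ A) * (IB + IA) *
      ENNReal.ofReal ((2:ℝ) ^ B) ≤ ENNReal.ofReal C := by
    rw [← ENNReal.ofReal_toReal hsumfin,
      ← ENNReal.ofReal_mul (by positivity), ← ENNReal.ofReal_mul (by positivity),
      ← ENNReal.ofReal_mul (by positivity)]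
    refine ENNReal.ofReal_le_ofReal ?_
    rw [hC]
    nlinarith [hC0, ENNReal.toReal_nonneg (a := IB + IA),
      (Real.rpow_pos_of_pos (by norm_num : (0:ℝ) < 2) A).le,
      (Real.rpow_pos_of_pos (by norm_num : (0:ℝ) < 2) B).le]
  calc ENNReal.ofReal (C₀^2) * ENNReal.ofReal ((2:ℝ) ^ A) * (IB + IA) *
        ENNReal.ofReal ((2:ℝ) ^ B) * l2sq σ' f * ENNReal.ofReal (cInt w R) *
        (∫⁻ z, ENNReal.ofReal (R.side ^ (2 * α) /
          (R.side + Metric.infDist z R.set) ^ (2 * ((n : ℝ) + α)) * σ' z))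
      = (ENNReal.ofReal (C₀^2) * ENNReal.ofReal ((2:ℝ) ^ A) * (IB + IA) *
          ENNReal.ofReal ((2:ℝ) ^ B)) * (l2sq σ' f * ENNReal.ofReal (cInt w R) *
          ∫⁻ z, ENNReal.ofReal (R.side ^ (2 * α) /
            (R.side + Metric.infDist z R.set) ^ (2 * ((n : ℝ) + α)) * σ' z)) := by ring
    _ ≤ ENNReal.ofReal C * (l2sq σ' f * ENNReal.ofReal (cInt w R) *
          ∫⁻ z, ENNReal.ofReal (R.side ^ (2 * α) /
            (R.side + Metric.infDist z R.set) ^ (2 * ((n : ℝ) + α)) * σ' z)) :=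
        mul_le_mul_left hconst _
    _ = ENNReal.ofReal C * l2sq σ' f * ENNReal.ofReal (cInt w R) *
          ∫⁻ z, ENNReal.ofReal (R.side ^ (2 * α) /
            (R.side + Metric.infDist z R.set) ^ (2 * ((n : ℝ) + α)) * σ' z) := by ring
end
end

section
/- Let n ≥ 2, λ > 2, 0 < α ≤ min{1, n(λ−2)/2}, and let σ, w be weights on ℝⁿ with finite A₂ constant 𝒜₂. Suppose that 𝒦 := sup{ ‖g_λ^{*,α}(fσ)‖_{L²(w dx)} : f ∈ L²(σ) compactly supported, ‖f‖_{L²(σ)} = 1 } is finite. Then for every cube Q ⊂ ℝⁿ, w(Q) ∫_{ℝⁿ} ℓ(Q)^{2α} (ℓ(Q) + dist(z,Q))^{−2(n+α)} σ(z) dz ≤ C (𝒦² + 𝒜₂²), where C depends only on n, α, λ. -/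
open MeasureTheory Set
open scoped ENNReal NNReal BigOperators

noncomputable section

-- ## auxiliary lemmas

lemma coord_le_dist {n : ℕ} (x y : E n) (i : Fin n) : |x i - y i| ≤ dist x y := by
  rw [EuclideanSpace.dist_eq, ← Real.sqrt_sq_eq_abs]
  apply Real.sqrt_le_sqrt
  have := Finset.single_le_sum (f := fun j => dist (x j) (y j) ^ 2)
    (fun j _ => sq_nonneg _) (Finset.mem_univ i)
  simpa [Real.dist_eq, sq_abs] using this

lemma cube_measurable {n : ℕ} (R : Cube n) : MeasurableSet R.set := by
  have h : R.set = ⋂ i, (fun x : E n => x i) ⁻¹' (Set.Ico (R.corner i) (R.corner i + R.side)) := by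
    ext x; simp [Cube.set, Set.mem_iInter, Set.mem_Ico]
  rw [h]
  exact MeasurableSet.iInter fun i =>
    ((EuclideanSpace.proj i).continuous.measurable) measurableSet_Ico

lemma cube_integrableOn {n : ℕ} {σ : E n → ℝ} (h : MeasureTheory.LocallyIntegrable σ)
    (R : Cube n) : IntegrableOn σ R.set := by
  have hsub : R.set ⊆ Metric.closedBall R.corner (Real.sqrt (n * R.side ^ 2)) := by
    intro x hx
    rw [Metric.mem_closedBall, EuclideanSpace.dist_eq]
    apply Real.sqrt_le_sqrt
    calc ∑ i, dist (x i) (R.corner i) ^ 2 ≤ ∑ _i : Fin n, R.side ^ 2 := by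
          apply Finset.sum_le_sum
          intro i _
          have h1 := hx i
          rw [Real.dist_eq]
          nlinarith [h1.1, h1.2, abs_nonneg (x i - R.corner i), sq_abs (x i - R.corner i)]
      _ = n * R.side ^ 2 := by simp [Finset.sum_const, Finset.card_univ]
  exact (h.integrableOn_isCompact (isCompact_closedBall _ _)).mono_set hsub

lemma cInt_nonneg {n : ℕ} {σ : E n → ℝ} (hσ : ∀ x, 0 ≤ σ x) (R : Cube n) : 0 ≤ cInt σ R :=
  setIntegral_nonneg (cube_measurable R) fun x _ => hσ x

lemma cInt_mono {n : ℕ} {σ : E n → ℝ} (hσ : IsWeight σ) {R R' : Cube n}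
    (h : R.set ⊆ R'.set) : cInt σ R ≤ cInt σ R' :=
  setIntegral_mono_set (cube_integrableOn hσ.2 R') (ae_of_all _ fun x => hσ.1 x)
    (HasSubset.Subset.eventuallyLE h)

lemma lintegral_cube {n : ℕ} {σ : E n → ℝ} (hσ : IsWeight σ) (R : Cube n) :
    ∫⁻ z in R.set, ENNReal.ofReal (σ z) = ENNReal.ofReal (cInt σ R) :=
  (ofReal_integral_eq_lintegral_ofReal (cube_integrableOn hσ.2 R)
    (ae_of_all _ fun x => hσ.1 x)).symm

def QCube {n : ℕ} (Q : Cube n) (k : ℕ) : Cube n :=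
  ⟨WithLp.toLp 2 (fun i => Q.corner i - ((2:ℝ) ^ k - 1) / 2 * Q.side : Fin n → ℝ), 2 ^ k * Q.side,
    by have := Q.side_pos; positivity⟩

lemma mem_QCube {n : ℕ} (Q : Cube n) (k : ℕ) (x : E n) :
    x ∈ (QCube Q k).set ↔ ∀ i, Q.corner i - ((2:ℝ) ^ k - 1) / 2 * Q.side ≤ x i ∧
      x i < Q.corner i - ((2:ℝ) ^ k - 1) / 2 * Q.side + 2 ^ k * Q.side := Iff.rfl

lemma corner_mem {n : ℕ} (Q : Cube n) : Q.corner ∈ Q.set :=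
  fun _ => ⟨le_refl _, by linarith [Q.side_pos]⟩

lemma subset_QCube {n : ℕ} (Q : Cube n) (k : ℕ) : Q.set ⊆ (QCube Q k).set := by
  intro x hx
  rw [mem_QCube]
  intro i
  have h1 : (1:ℝ) ≤ 2 ^ k := one_le_pow₀ (by norm_num)
  have h2 := hx i
  have := Q.side_pos
  constructor
  · nlinarith [h2.1]
  · nlinarith [h2.2]

lemma QCube_mono {n : ℕ} (Q : Cube n) (k : ℕ) : (QCube Q k).set ⊆ (QCube Q (k+1)).set := by
  intro x hx
  rw [mem_QCube] at hx ⊢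
  intro i
  have h := hx i
  have h1 : (1:ℝ) ≤ 2 ^ k := one_le_pow₀ (by norm_num)
  have h2 : ((2:ℝ)) ^ (k+1) = 2 * 2 ^ k := by ring
  have := Q.side_pos
  constructor
  · rw [h2]; nlinarith [h.1]
  · rw [h2]; nlinarith [h.2]

lemma exists_mem_QCube {n : ℕ} (Q : Cube n) (z : E n) : ∃ m, z ∈ (QCube Q m).set := by
  have hℓ := Q.side_pos
  set Rz := dist z Q.corner with hRz
  have hRz0 : 0 ≤ Rz := dist_nonneg
  obtain ⟨m, hm⟩ := pow_unbounded_of_one_lt (2 * Rz / Q.side + 1) (y := (2:ℝ)) (by norm_num)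
  have h2 : 2 * Rz < ((2:ℝ) ^ m - 1) * Q.side := by
    have h3 : 2 * Rz / Q.side < (2:ℝ) ^ m - 1 := by linarith
    have := (div_lt_iff₀ hℓ).mp h3
    linarith
  refine ⟨m, ?_⟩
  rw [mem_QCube]
  intro i
  have hco := abs_le.mp (coord_le_dist z Q.corner i)
  constructor
  · nlinarith [hco.1]
  · nlinarith [hco.2]

lemma notmem_infDist {n : ℕ} (Q : Cube n) (k : ℕ) (z : E n)
    (hz : z ∉ (QCube Q k).set) :
    ((2:ℝ) ^ k - 1) / 2 * Q.side ≤ Metric.infDist z Q.set := by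
  have hℓ := Q.side_pos
  refine le_of_not_gt fun hlt => ?_
  obtain ⟨y, hy, hdy⟩ := (Metric.infDist_lt_iff ⟨Q.corner, corner_mem Q⟩).mp hlt
  rw [mem_QCube] at hz
  push_neg at hz
  obtain ⟨i, hi⟩ := hz
  have habs := lt_of_le_of_lt (coord_le_dist z y i) hdy
  have hab := abs_lt.mp habs
  have hy1 := (hy i).1
  have hy2 := (hy i).2
  rcases le_or_gt (Q.corner i - ((2:ℝ) ^ k - 1) / 2 * Q.side) (z i) with hc | hc
  · have := hi hc
    linarith [hab.2]
  · linarith [hab.1]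

def Dk {n : ℕ} (Q : Cube n) : ℕ → Set (E n)
  | 0 => (QCube Q 0).set
  | (k+1) => (QCube Q (k+1)).set \ (QCube Q k).set

lemma Dk_subset {n : ℕ} (Q : Cube n) (k : ℕ) : Dk Q k ⊆ (QCube Q (k+1)).set := by
  cases k with
  | zero => exact QCube_mono Q 0
  | succ k => exact fun x hx => (QCube_mono Q (k+1)) hx.1

lemma Dk_measurable {n : ℕ} (Q : Cube n) (k : ℕ) : MeasurableSet (Dk Q k) := by
  cases k with
  | zero => exact cube_measurable _
  | succ k => exact (cube_measurable _).diff (cube_measurable _)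

lemma iUnion_Dk {n : ℕ} (Q : Cube n) : ⋃ k, Dk Q k = Set.univ := by
  apply Set.eq_univ_of_forall
  intro z
  obtain ⟨m, hm⟩ := exists_mem_QCube Q z
  induction m with
  | zero => exact Set.mem_iUnion.2 ⟨0, hm⟩
  | succ m ih =>
    by_cases hzm : z ∈ (QCube Q m).set
    · exact ih hzm
    · exact Set.mem_iUnion.2 ⟨m + 1, ⟨hm, hzm⟩⟩

lemma Dk_dist_bound {n : ℕ} (Q : Cube n) (k : ℕ) (z : E n) (hz : z ∈ Dk Q k) :
    (2:ℝ) ^ k * Q.side / 8 ≤ Q.side + Metric.infDist z Q.set := by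
  have hℓ := Q.side_pos
  have hd0 : 0 ≤ Metric.infDist z Q.set := Metric.infDist_nonneg
  cases k with
  | zero => simp only [pow_zero, one_mul]; linarith
  | succ k =>
    have hlow := notmem_infDist Q k z hz.2
    have h1 : (1:ℝ) ≤ 2 ^ k := one_le_pow₀ (by norm_num)
    have h2 : ((2:ℝ)) ^ (k+1) = 2 * 2 ^ k := by ring
    rw [h2]
    nlinarith

/-- The norm inequality over compactly supported functions,
together with the `A₂` condition, implies the Poisson-type `A₂` condition:
`w(Q) ∫ ℓ(Q)^{2α} (ℓ(Q)+dist(z,Q))^{−2(n+α)} σ(z) dz ≤ C (𝒦² + 𝒜₂²)`. -/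
theorem compact_testing_implies_poisson_A2
    (n : ℕ) (hn : 2 ≤ n) (α lam : ℝ) (hlam : 2 < lam)
    (hα0 : 0 < α) (hα : α ≤ min 1 ((n * (lam - 2)) / 2)) :
    ∃ C : ℝ, 0 < C ∧
      ∀ σ w : E n → ℝ, IsWeight σ → IsWeight w →
        ∀ A2 : ℝ, 0 ≤ A2 → A2sq σ w ≤ ENNReal.ofReal (A2 ^ 2) →
          ∀ 𝒦 : ℝ, 0 ≤ 𝒦 →
            (∀ f : E n → ℝ, Measurable f → HasCompactSupport f → l2sq σ f < ⊤ →
              (∫⁻ x, gStarSq n α lam (fun z => f z * σ z) x * ENNReal.ofReal (w x))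
                ≤ ENNReal.ofReal (𝒦 ^ 2) * l2sq σ f) →
            ∀ Q : Cube n,
              ENNReal.ofReal (cInt w Q) *
                  (∫⁻ z, ENNReal.ofReal
                    (Q.side ^ (2 * α) /
                        (Q.side + Metric.infDist z Q.set) ^ (2 * ((n : ℝ) + α)) * σ z))
                ≤ ENNReal.ofReal (C * (𝒦 ^ 2 + A2 ^ 2)) := by
  have hr0 : (0:ℝ) < (2:ℝ) ^ (-(2*α)) := Real.rpow_pos_of_pos two_pos _
  have hr1 : (2:ℝ) ^ (-(2*α)) < 1 :=
    Real.rpow_lt_one_of_one_lt_of_neg one_lt_two (by linarith)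
  set r : ℝ := (2:ℝ) ^ (-(2*α)) with hrdef
  set p : ℝ := 2 * ((n:ℝ) + α) with hpdef
  have hp0 : 0 < p := by rw [hpdef]; positivity
  set C1 : ℝ := (8:ℝ) ^ p * (2:ℝ) ^ (2*(n:ℝ)) with hC1def
  have hC1 : 0 < C1 := by rw [hC1def]; positivity
  refine ⟨C1 * (1 - r)⁻¹, mul_pos hC1 (inv_pos.2 (by linarith)), ?_⟩
  intro σ w hσ hw A2 hA2nn hA2 𝒦 h𝒦 _ Q
  have hℓ : 0 < Q.side := Q.side_pos
  -- A2 consequence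
  have hA2Q : ∀ R : Cube n, cInt σ R * cInt w R ≤ A2 ^ 2 * R.vol ^ 2 := by
    intro R
    have h1 : ENNReal.ofReal ((cInt σ R / R.vol) * (cInt w R / R.vol))
        ≤ ENNReal.ofReal (A2 ^ 2) :=
      le_trans (le_iSup (fun Q : Cube n =>
        ENNReal.ofReal ((cInt σ Q / Q.vol) * (cInt w Q / Q.vol))) R) hA2
    have h2 := (ENNReal.ofReal_le_ofReal_iff (by positivity)).mp h1
    have hv : 0 < R.vol := pow_pos R.side_pos n
    rw [div_mul_div_comm, div_le_iff₀ (by exact mul_pos hv hv)] at h2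
    nlinarith
  -- the key per-annulus estimate
  have key : ∀ k : ℕ,
      ENNReal.ofReal (cInt w Q) * ∫⁻ z in Dk Q k, ENNReal.ofReal
          (Q.side ^ (2 * α) /
            (Q.side + Metric.infDist z Q.set) ^ (2 * ((n : ℝ) + α)) * σ z)
        ≤ ENNReal.ofReal ((C1 * A2 ^ 2) * r ^ k) := by
    intro k
    set Q' : Cube n := QCube Q (k+1) with hQ'
    set s : ℝ := (2:ℝ) ^ k * Q.side with hsdef
    have hs : 0 < s := by rw [hsdef]; positivity
    set B : ℝ := (8:ℝ) ^ p * Q.side ^ (2*α) / s ^ p with hBdef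
    have hB0 : 0 ≤ B := le_of_lt (by
      rw [hBdef]
      exact div_pos (by positivity) (Real.rpow_pos_of_pos hs _))
    -- pointwise kernel bound on Dk
    have hker : ∀ z ∈ Dk Q k,
        Q.side ^ (2 * α) / (Q.side + Metric.infDist z Q.set) ^ (2 * ((n : ℝ) + α)) * σ z
          ≤ B * σ z := by
      intro z hz
      have hd0 : 0 ≤ Metric.infDist z Q.set := Metric.infDist_nonneg
      have hlow := Dk_dist_bound Q k z hz
      have hs8 : 0 < s / 8 := div_pos hs (by norm_num)
      apply mul_le_mul_of_nonneg_right _ (hσ.1 z)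
      have hmono : (s / 8) ^ p ≤ (Q.side + Metric.infDist z Q.set) ^ p :=
        Real.rpow_le_rpow hs8.le hlow hp0.le
      have hpos : (0:ℝ) < (s / 8) ^ p := Real.rpow_pos_of_pos hs8 _
      calc Q.side ^ (2*α) / (Q.side + Metric.infDist z Q.set) ^ p
          ≤ Q.side ^ (2*α) / (s / 8) ^ p :=
            div_le_div_of_nonneg_left (Real.rpow_nonneg hℓ.le _) hpos hmono
        _ = B := by
            rw [hBdef, Real.div_rpow hs.le (by norm_num : (0:ℝ) ≤ 8), div_div_eq_mul_div]
            ring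
    -- the integral bound
    have hint : (∫⁻ z in Dk Q k, ENNReal.ofReal
          (Q.side ^ (2 * α) /
            (Q.side + Metric.infDist z Q.set) ^ (2 * ((n : ℝ) + α)) * σ z))
        ≤ ENNReal.ofReal B * ENNReal.ofReal (cInt σ Q') := by
      calc (∫⁻ z in Dk Q k, ENNReal.ofReal
            (Q.side ^ (2 * α) /
              (Q.side + Metric.infDist z Q.set) ^ (2 * ((n : ℝ) + α)) * σ z))
          ≤ ∫⁻ z in Dk Q k, ENNReal.ofReal (B * σ z) := by
            apply lintegral_mono_ae
            exact ae_restrict_of_forall_mem (Dk_measurable Q k)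
              fun z hz => ENNReal.ofReal_le_ofReal (hker z hz)
        _ = ENNReal.ofReal B * ∫⁻ z in Dk Q k, ENNReal.ofReal (σ z) := by
            simp_rw [ENNReal.ofReal_mul hB0]
            exact lintegral_const_mul' _ _ ENNReal.ofReal_ne_top
        _ ≤ ENNReal.ofReal B * ∫⁻ z in Q'.set, ENNReal.ofReal (σ z) :=
            mul_le_mul_right (lintegral_mono_set (by rw [hQ']; exact Dk_subset Q k)) _
        _ = ENNReal.ofReal B * ENNReal.ofReal (cInt σ Q') := by
            rw [lintegral_cube hσ]
    -- the scalar estimate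
    have hscal : cInt w Q * (B * cInt σ Q') ≤ (C1 * A2 ^ 2) * r ^ k := by
      have hw' : cInt w Q ≤ cInt w Q' := cInt_mono hw (by rw [hQ']; exact subset_QCube Q (k+1))
      have hA := hA2Q Q'
      have hw0 : 0 ≤ cInt w Q := cInt_nonneg hw.1 Q
      have hσ0 : 0 ≤ cInt σ Q' := cInt_nonneg hσ.1 Q'
      -- key rpow algebra : B * Q'.vol ^ 2 = C1 * r ^ k
      have hvol : Q'.vol = (2*s) ^ n := by
        rw [hQ', hsdef]
        show ((2:ℝ) ^ (k+1) * Q.side) ^ n = (2 * ((2:ℝ) ^ k * Q.side)) ^ n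
        ring
      have hkey : B * Q'.vol ^ 2 = C1 * r ^ k := by
        have e1 : Q'.vol ^ 2 = (2*s) ^ (2*(n:ℝ)) := by
          rw [hvol, ← pow_mul, ← Real.rpow_natCast (2*s) (n*2)]
          congr 1; push_cast; ring
        have e2 : (2*s) ^ (2*(n:ℝ)) = (2:ℝ) ^ (2*(n:ℝ)) * s ^ (2*(n:ℝ)) :=
          Real.mul_rpow (by norm_num) hs.le
        have e3 : s ^ (2*(n:ℝ)) = s ^ p * s ^ (-(2*α)) := by
          rw [← Real.rpow_add hs]; congr 1; rw [hpdef]; ring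
        have e4 : s ^ (-(2*α)) = r ^ k * Q.side ^ (-(2*α)) := by
          rw [hsdef, Real.mul_rpow (by positivity) hℓ.le]
          congr 1
          rw [hrdef, ← Real.rpow_natCast ((2:ℝ) ^ (-(2*α))) k,
            ← Real.rpow_natCast (2:ℝ) k, ← Real.rpow_mul (by norm_num : (0:ℝ) ≤ 2),
            ← Real.rpow_mul (by norm_num : (0:ℝ) ≤ 2)]
          congr 1; ring
        have e6 : Q.side ^ (2*α) * Q.side ^ (-(2*α)) = 1 := by
          rw [← Real.rpow_add hℓ]; norm_num
        have hsp : s ^ p ≠ 0 := ne_of_gt (Real.rpow_pos_of_pos hs _)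
        rw [hBdef, e1, e2, e3, e4, hC1def]
        field_simp
        linear_combination e6
      calc cInt w Q * (B * cInt σ Q')
          ≤ cInt w Q' * (B * cInt σ Q') :=
            mul_le_mul_of_nonneg_right hw' (mul_nonneg hB0 hσ0)
        _ = B * (cInt σ Q' * cInt w Q') := by ring
        _ ≤ B * (A2 ^ 2 * Q'.vol ^ 2) := mul_le_mul_of_nonneg_left hA hB0
        _ = (B * Q'.vol ^ 2) * A2 ^ 2 := by ring
        _ = (C1 * r ^ k) * A2 ^ 2 := by rw [hkey]
        _ = (C1 * A2 ^ 2) * r ^ k := by ring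
    calc ENNReal.ofReal (cInt w Q) * ∫⁻ z in Dk Q k, ENNReal.ofReal
            (Q.side ^ (2 * α) /
              (Q.side + Metric.infDist z Q.set) ^ (2 * ((n : ℝ) + α)) * σ z)
        ≤ ENNReal.ofReal (cInt w Q) * (ENNReal.ofReal B * ENNReal.ofReal (cInt σ Q')) :=
          mul_le_mul_right hint _
      _ = ENNReal.ofReal (cInt w Q * (B * cInt σ Q')) := by
          rw [← ENNReal.ofReal_mul hB0, ← ENNReal.ofReal_mul (cInt_nonneg hw.1 Q)]
      _ ≤ ENNReal.ofReal ((C1 * A2 ^ 2) * r ^ k) := ENNReal.ofReal_le_ofReal hscal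
  -- summing up
  have hr0' : (0:ℝ) ≤ r := hr0.le
  have h1r : (0:ℝ) < 1 - r := by linarith
  calc ENNReal.ofReal (cInt w Q) *
        ∫⁻ z, ENNReal.ofReal
          (Q.side ^ (2 * α) /
            (Q.side + Metric.infDist z Q.set) ^ (2 * ((n : ℝ) + α)) * σ z)
      = ENNReal.ofReal (cInt w Q) *
        ∫⁻ z in ⋃ k, Dk Q k, ENNReal.ofReal
          (Q.side ^ (2 * α) /
            (Q.side + Metric.infDist z Q.set) ^ (2 * ((n : ℝ) + α)) * σ z) := by
        rw [iUnion_Dk, setLIntegral_univ]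
    _ ≤ ENNReal.ofReal (cInt w Q) *
        ∑' k, ∫⁻ z in Dk Q k, ENNReal.ofReal
          (Q.side ^ (2 * α) /
            (Q.side + Metric.infDist z Q.set) ^ (2 * ((n : ℝ) + α)) * σ z) :=
        mul_le_mul_right (lintegral_iUnion_le _ _) _
    _ = ∑' k, ENNReal.ofReal (cInt w Q) * ∫⁻ z in Dk Q k, ENNReal.ofReal
          (Q.side ^ (2 * α) /
            (Q.side + Metric.infDist z Q.set) ^ (2 * ((n : ℝ) + α)) * σ z) :=
        ENNReal.tsum_mul_left.symm
    _ ≤ ∑' k, ENNReal.ofReal ((C1 * A2 ^ 2) * r ^ k) := ENNReal.tsum_le_tsum key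
    _ = ∑' k : ℕ, ENNReal.ofReal (C1 * A2 ^ 2) * (ENNReal.ofReal r) ^ k := by
        congr 1; funext k
        rw [ENNReal.ofReal_mul (by nlinarith [hC1, sq_nonneg A2] : (0:ℝ) ≤ C1 * A2 ^ 2), ENNReal.ofReal_pow hr0']
    _ = ENNReal.ofReal (C1 * A2 ^ 2) * (1 - ENNReal.ofReal r)⁻¹ := by
        rw [ENNReal.tsum_mul_left, ENNReal.tsum_geometric]
    _ = ENNReal.ofReal (C1 * A2 ^ 2) * ENNReal.ofReal ((1 - r)⁻¹) := by
        congr 1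
        rw [ENNReal.ofReal_inv_of_pos h1r, ENNReal.ofReal_sub 1 hr0', ENNReal.ofReal_one]
    _ = ENNReal.ofReal (C1 * A2 ^ 2 * (1 - r)⁻¹) := by
        rw [← ENNReal.ofReal_mul (by nlinarith [hC1, sq_nonneg A2] : (0:ℝ) ≤ C1 * A2 ^ 2)]
    _ ≤ ENNReal.ofReal (C1 * (1 - r)⁻¹ * (𝒦 ^ 2 + A2 ^ 2)) := by
        apply ENNReal.ofReal_le_ofReal
        have h : A2 ^ 2 ≤ 𝒦 ^ 2 + A2 ^ 2 := by nlinarith [sq_nonneg 𝒦]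
        have h2 : (0:ℝ) ≤ C1 * (1 - r)⁻¹ :=
          mul_nonneg hC1.le (inv_nonneg.2 h1r.le)
        have := mul_le_mul_of_nonneg_left h h2
        nlinarith [this]

end
end
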